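/- Let θ_i = i^{−1/2} for i ≥ 1 and Ψ_θ(u) = Σ_{i≥1} θ_i (e^{−uθ_i} − 1 + uθ_i). Then there is a constant C such that Ψ_θ(u) ≤ C(u log u + u) for all u ≥ 2, and consequently ∫_1^∞ du/Ψ_θ(u) = ∞. -/

import Mathlib

open MeasureTheory Set Real

/-- `Ψ_θ` for the sequence `θ_i = i^{−1/2}`, `i ≥ 1`. -/
noncomputable def PsiHalf (u : ℝ) : ℝ :=
  ∑' i : ℕ, ((i : ℝ) + 1) ^ (-(1 / 2 : ℝ)) *
    (Real.exp (-u * ((i : ℝ) + 1) ^ (-(1 / 2 : ℝ))) - 1 + u * ((i : ℝ) + 1) ^ (-(1 / 2 : ℝ)))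

/-!
Since `0 ≤ e^{-x} - 1 + x ≤ min(x, x²)` for `x ≥ 0`, the terms of `Ψ_θ(u)` with `i < N` are at
most `u θ_i²` and the remaining ones at most `u² θ_i³`. For `θ_i = i^{-1/2}` and `N = ⌈u²⌉` the
first part is `u` times a harmonic sum, hence `≤ u (1 + log N)`, and the second is `u²` times a
tail of `∑ i^{-3/2}`, hence `≤ 2u²/√N ≤ 2u`. So `1/Ψ_θ(u)` dominates a multiple of
`1/(u log u + u)`, the derivative of the unbounded function `log (log u + 1)`.
-/

open Filter

namespace Real

lemma exp_neg_sub_one_add_le_self {x : ℝ} (hx : 0 ≤ x) : exp (-x) - 1 + x ≤ x := by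
  linarith [exp_le_one_iff.2 (neg_nonpos.2 hx)]

lemma exp_neg_sub_one_add_le_sq {x : ℝ} (hx : 0 ≤ x) : exp (-x) - 1 + x ≤ x ^ 2 := by
  have hexp : exp (-x) ≤ (1 + x)⁻¹ := by
    rw [exp_neg]
    exact inv_anti₀ (by positivity) (by linarith [add_one_le_exp x])
  have hfrac : (1 + x)⁻¹ - 1 + x = x ^ 2 / (1 + x) := by
    field_simp
    ring
  linarith [div_le_self (sq_nonneg x) (by linarith : (1 : ℝ) ≤ 1 + x)]

end Real

section Psi

noncomputable def psiTerm (u t : ℝ) : ℝ := t * (exp (-u * t) - 1 + u * t)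

noncomputable def Psi (θ : ℕ → ℝ) (u : ℝ) : ℝ := ∑' i, psiTerm u (θ i)

variable {u t : ℝ}

lemma psiTerm_nonneg (ht : 0 ≤ t) : 0 ≤ psiTerm u t :=
  mul_nonneg ht (by linarith [add_one_le_exp (-u * t)])

lemma psiTerm_pos (hu : 0 < u) (ht : 0 < t) : 0 < psiTerm u t :=
  mul_pos ht (by linarith [add_one_lt_exp (mul_neg_of_neg_of_pos (neg_neg_of_pos hu) ht).ne])

lemma psiTerm_le_mul_sq (hu : 0 ≤ u) (ht : 0 ≤ t) : psiTerm u t ≤ u * t ^ 2 := by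
  have h := exp_neg_sub_one_add_le_self (mul_nonneg hu ht)
  rw [psiTerm, neg_mul]
  nlinarith

lemma psiTerm_le_sq_mul_cube (hu : 0 ≤ u) (ht : 0 ≤ t) : psiTerm u t ≤ u ^ 2 * t ^ 3 := by
  have h := exp_neg_sub_one_add_le_sq (mul_nonneg hu ht)
  rw [psiTerm, neg_mul]
  nlinarith

variable {θ : ℕ → ℝ}

lemma summable_psiTerm (hθ : ∀ i, 0 ≤ θ i) (hθ3 : Summable fun i => θ i ^ 3) (hu : 0 ≤ u) :
    Summable fun i => psiTerm u (θ i) :=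
  .of_nonneg_of_le (fun i => psiTerm_nonneg (hθ i)) (fun i => psiTerm_le_sq_mul_cube hu (hθ i))
    (hθ3.mul_left _)

lemma Psi_pos (hθ : ∀ i, 0 ≤ θ i) (hθ3 : Summable fun i => θ i ^ 3) (hu : 0 < u) {j : ℕ}
    (hj : 0 < θ j) : 0 < Psi θ u :=
  (psiTerm_pos hu hj).trans_le <| (summable_psiTerm hθ hθ3 hu.le).le_tsum j
    fun i _ => psiTerm_nonneg (hθ i)

lemma Psi_le_sum_range_add_tsum (hθ : ∀ i, 0 ≤ θ i) (hθ3 : Summable fun i => θ i ^ 3)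
    (hu : 0 ≤ u) (N : ℕ) :
    Psi θ u ≤ u * ∑ i ∈ Finset.range N, θ i ^ 2 + u ^ 2 * ∑' i, θ (i + N) ^ 3 := by
  rw [Psi, ← (summable_psiTerm hθ hθ3 hu).sum_add_tsum_nat_add N, Finset.mul_sum,
    ← tsum_mul_left]
  exact add_le_add (Finset.sum_le_sum fun i _ => psiTerm_le_mul_sq hu (hθ i))
    ((summable_psiTerm hθ hθ3 hu).comp_injective (add_left_injective N) |>.tsum_le_tsum
      (fun i => psiTerm_le_sq_mul_cube hu (hθ _)) (((summable_nat_add_iff N).2 hθ3).mul_left _))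

end Psi

noncomputable def thetaHalf (i : ℕ) : ℝ := ((i : ℝ) + 1) ^ (-(1 / 2 : ℝ))

lemma PsiHalf_eq_Psi : PsiHalf = Psi thetaHalf := rfl

lemma thetaHalf_pos (i : ℕ) : 0 < thetaHalf i := by
  unfold thetaHalf
  positivity

lemma thetaHalf_sq (i : ℕ) : thetaHalf i ^ 2 = ((i : ℝ) + 1)⁻¹ := by
  rw [thetaHalf, ← rpow_natCast, ← rpow_mul (by positivity)]
  norm_num [rpow_neg_one]

lemma thetaHalf_cube (i : ℕ) : thetaHalf i ^ 3 = ((i : ℝ) + 1) ^ (-(3 / 2 : ℝ)) := by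
  rw [thetaHalf, ← rpow_natCast, ← rpow_mul (by positivity)]
  norm_num

lemma summable_thetaHalf_cube : Summable fun i => thetaHalf i ^ 3 := by
  simp_rw [thetaHalf_cube]
  exact_mod_cast (summable_nat_add_iff 1).2 (summable_nat_rpow.2 (by norm_num : -(3 / 2 : ℝ) < -1))

lemma sum_range_thetaHalf_sq_le (N : ℕ) :
    ∑ i ∈ Finset.range N, thetaHalf i ^ 2 ≤ 1 + log N := by
  have : ∑ i ∈ Finset.range N, thetaHalf i ^ 2 = harmonic N := by
    simp [thetaHalf_sq, harmonic]
  exact this ▸ harmonic_le_one_add_log N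

lemma tsum_thetaHalf_cube_tail_le {N : ℕ} (hN : 0 < N) :
    ∑' i, thetaHalf (i + N) ^ 3 ≤ 2 / √N := by
  have hN' : (0 : ℝ) < N := Nat.cast_pos.2 hN
  have htest := AntitoneOn.tsum_comp_add_le_integral N
    ((antitoneOn_rpow_Ioi_of_exponent_nonpos (by norm_num : -(3 / 2 : ℝ) ≤ 0)).mono ?_)
    (integrableOn_Ioi_rpow_of_lt (by norm_num) hN') fun t ht => ?_
  · rw [integral_Ioi_rpow_of_lt (by norm_num) hN'] at htest
    convert htest using 1
    · simp_rw [thetaHalf_cube]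
      push_cast
      rfl
    · rw [sqrt_eq_rpow, div_eq_mul_inv, ← rpow_neg hN'.le]
      norm_num
      ring
  · exact fun t ht => hN'.trans_le ht
  · exact rpow_nonneg (hN'.le.trans ht.le) _

lemma PsiHalf_le_four_mul {u : ℝ} (hu : 1 ≤ u) : PsiHalf u ≤ 4 * (u * log u + u) := by
  have hu0 : 0 < u := one_pos.trans_le hu
  set N := ⌈u ^ 2⌉₊
  have hN : 0 < N := Nat.ceil_pos.2 (by positivity)
  have hu_le : u ≤ √N := le_sqrt_of_sq_le (Nat.le_ceil _)
  have hlogN : log N ≤ 1 + 2 * log u := by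
    have hN2 : (N : ℝ) ≤ 2 * u ^ 2 := by
      nlinarith [Nat.ceil_lt_add_one (sq_nonneg u)]
    calc log N ≤ log (2 * u ^ 2) := log_le_log (Nat.cast_pos.2 hN) hN2
      _ = log 2 + 2 * log u := by
        rw [log_mul two_ne_zero (by positivity), log_pow, Nat.cast_ofNat]
      _ ≤ 1 + 2 * log u := by linarith [log_two_lt_d9]
  have htail : u ^ 2 * ∑' i, thetaHalf (i + N) ^ 3 ≤ 2 * u :=
    calc u ^ 2 * ∑' i, thetaHalf (i + N) ^ 3 ≤ u ^ 2 * (2 / u) := by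
          grw [tsum_thetaHalf_cube_tail_le hN, ← hu_le]
      _ = 2 * u := by field_simp
  have hsplit := Psi_le_sum_range_add_tsum (fun i => (thetaHalf_pos i).le)
    summable_thetaHalf_cube hu0.le N
  have hhead : u * ∑ i ∈ Finset.range N, thetaHalf i ^ 2 ≤ u * (2 + 2 * log u) := by
    grw [sum_range_thetaHalf_sq_le N, hlogN]
    linarith
  rw [← PsiHalf_eq_Psi] at hsplit
  linarith [mul_nonneg hu0.le (log_nonneg hu)]

lemma PsiHalf_pos {u : ℝ} (hu : 0 < u) : 0 < PsiHalf u :=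
  Psi_pos (fun i => (thetaHalf_pos i).le) summable_thetaHalf_cube hu (thetaHalf_pos 0)

theorem not_integrableOn_Ici_one_div_of_le_mul_log {g : ℝ → ℝ} {C a : ℝ}
    (hpos : ∀ᶠ u in atTop, 0 < g u) (hle : ∀ᶠ u in atTop, g u ≤ C * (u * log u + u)) :
    ¬ IntegrableOn (fun u => 1 / g u) (Ici a) := by
  have hderiv : ∀ᶠ u in atTop,
      HasDerivAt (fun x => log (log x + 1)) ((log u + 1)⁻¹ * u⁻¹) u := by
    filter_upwards [eventually_gt_atTop 1] with u hu
    exact ((hasDerivAt_log (by positivity)).add_const 1).log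
      (by linarith [log_pos hu]) |>.congr_deriv (by ring)
  refine not_integrableOn_of_tendsto_norm_atTop_of_deriv_isBigO_filter atTop (Ici_mem_atTop a)
    (hderiv.mono fun u hu => hu.differentiableAt)
    (tendsto_norm_atTop_atTop.comp <| tendsto_log_atTop.comp <|
      tendsto_atTop_add_const_right _ 1 tendsto_log_atTop) ?_
  refine Asymptotics.IsBigO.of_bound C ?_
  filter_upwards [hderiv, hpos, hle, eventually_gt_atTop 1] with u hu hgu hgle hu1
  have hlog : 0 < log u + 1 := by linarith [log_pos hu1]
  rw [hu.deriv, norm_of_nonneg (by positivity), norm_of_nonneg (by positivity), ← mul_inv,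
    ← div_eq_mul_one_div, le_div_iff₀ hgu, inv_mul_le_iff₀ (by positivity)]
  linarith

/-- For `θ_i = i^{−1/2}`, there is a constant `C` with `Ψ_θ(u) ≤ C(u log u + u)` for `u ≥ 2`,
and consequently `∫_1^∞ du/Ψ_θ(u) = ∞`. -/
theorem stmt5 :
    (∃ C : ℝ, 0 < C ∧ ∀ u : ℝ, 2 ≤ u → PsiHalf u ≤ C * (u * Real.log u + u)) ∧
    ¬ IntegrableOn (fun u => 1 / PsiHalf u) (Set.Ici (1 : ℝ)) :=
  ⟨⟨4, by norm_num, fun _ hu => PsiHalf_le_four_mul (one_le_two.trans hu)⟩,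
    not_integrableOn_Ici_one_div_of_le_mul_log
      ((eventually_gt_atTop 0).mono fun _ => PsiHalf_pos)
      ((eventually_ge_atTop 1).mono fun _ => PsiHalf_le_four_mul)⟩
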